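/- arXiv:2512.16258 — 3 statements merged into one kernel-verified Lean document; each statement's English description precedes it below -/
import Mathlib

section
/- Continuous equivalence transformations (Theorem 1): Let α₀ > 0, α₃ > 0, and α₁, α₂, t₀, x₀, y₀ be real numbers with α₁² + α₂² ≠ 0. Set λ = (α₁² + α₂²)/α₀, let σ : ℝ² → ℝ² be the invertible linear map σ(x,y) = (α₁x + α₂y, −α₂x + α₁y), and let T : ℝ³ → ℝ³ be the affine bijection T(t,x,y) = (α₀t + t₀, α₁x + α₂y + x₀, −α₂x + α₁y + y₀). Suppose (u, v, w) solves the system S(Ψ; d₁,d₂,d₃; k) on ℝ³. Define u* = α₃·(u ∘ T⁻¹), v* = α₃·(v ∘ T⁻¹), w* = α₃·(w ∘ T⁻¹), and Ψ*(X,Y) = λ·Ψ(σ⁻¹(X − x₀, Y − y₀)). Then (u*, v*, w*) solves the system S(Ψ*; λd₁, λd₂, λd₃; k/(α₀α₃)) on ℝ³. -/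
/-- Partial derivative with respect to `t` of a function of `(t,x,y)`. -/
noncomputable def pdT (f : ℝ × ℝ × ℝ → ℝ) (p : ℝ × ℝ × ℝ) : ℝ := fderiv ℝ f p (1, 0, 0)
/-- Partial derivative with respect to `x`. -/
noncomputable def pdX (f : ℝ × ℝ × ℝ → ℝ) (p : ℝ × ℝ × ℝ) : ℝ := fderiv ℝ f p (0, 1, 0)
/-- Partial derivative with respect to `y`. -/
noncomputable def pdY (f : ℝ × ℝ × ℝ → ℝ) (p : ℝ × ℝ × ℝ) : ℝ := fderiv ℝ f p (0, 0, 1)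
/-- `Ψ_x` for a function of `(x,y)`. -/
noncomputable def psiX (Ψ : ℝ × ℝ → ℝ) (q : ℝ × ℝ) : ℝ := fderiv ℝ Ψ q (1, 0)
/-- `Ψ_y` for a function of `(x,y)`. -/
noncomputable def psiY (Ψ : ℝ × ℝ → ℝ) (q : ℝ × ℝ) : ℝ := fderiv ℝ Ψ q (0, 1)

/-- `(u,v,w)` solves the convective Lotka–Volterra system `S(Ψ; d₁,d₂,d₃; k)` on `Ω`. -/
def SolvesS (Ψ : ℝ × ℝ → ℝ) (d₁ d₂ d₃ k : ℝ) (u v w : ℝ × ℝ × ℝ → ℝ)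
    (Ω : Set (ℝ × ℝ × ℝ)) : Prop :=
  ∀ p ∈ Ω,
    (pdT u p + psiY Ψ p.2 * pdX u p - psiX Ψ p.2 * pdY u p
      = d₁ * (pdX (pdX u) p + pdY (pdY u) p) - k * u p * v p) ∧
    (pdT v p + psiY Ψ p.2 * pdX v p - psiX Ψ p.2 * pdY v p
      = d₂ * (pdX (pdX v) p + pdY (pdY v) p) - k * u p * v p) ∧
    (pdT w p + psiY Ψ p.2 * pdX w p - psiX Ψ p.2 * pdY w p
      = d₃ * (pdX (pdX w) p + pdY (pdY w) p) + k * u p * v p)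

/-- The inverse of the rotation-dilation `σ(x,y) = (α₁x+α₂y, −α₂x+α₁y)`. -/
noncomputable def sigmaInv (α₁ α₂ : ℝ) (q : ℝ × ℝ) : ℝ × ℝ :=
  ((α₁ * q.1 - α₂ * q.2) / (α₁ ^ 2 + α₂ ^ 2), (α₂ * q.1 + α₁ * q.2) / (α₁ ^ 2 + α₂ ^ 2))

/-- The inverse of the affine bijection
`T(t,x,y) = (α₀t+t₀, α₁x+α₂y+x₀, −α₂x+α₁y+y₀)`. -/
noncomputable def Tinv (α₀ α₁ α₂ t₀ x₀ y₀ : ℝ) (p : ℝ × ℝ × ℝ) : ℝ × ℝ × ℝ :=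
  ((p.1 - t₀) / α₀, sigmaInv α₁ α₂ (p.2.1 - x₀, p.2.2 - y₀))

/-!
The chain rule for the affine map `T⁻¹` divides `∂_t` by `α₀`, multiplies the Jacobian
`Ψ_y u_x − Ψ_x u_y` by `det σ⁻¹ = 1/(α₁² + α₂²)` and, `σ` being conformal, divides the Laplacian
by `α₁² + α₂²`. The factor `λ` in `Ψ*` and in the diffusion coefficients turns both of the latter
into `1/α₀`, so every equation is simply divided by `α₀`, which `k/α₀` matches in the reaction
term. Multiplying the three unknowns by `α₃` then divides the reaction constant by `α₃`.
Since the linear part of `T⁻¹` is invertible, its chain rule holds for arbitrary functions.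
-/

section Calculus

variable {E F G : Type*} [NormedAddCommGroup E] [NormedSpace ℝ E] [NormedAddCommGroup F]
  [NormedSpace ℝ F] [NormedAddCommGroup G] [NormedSpace ℝ G]

theorem fderiv_comp_linearEquiv_sub (f : F → G) (L : E ≃L[ℝ] F) (a x : E) :
    fderiv ℝ (fun x => f (L (x - a))) x = (fderiv ℝ f (L (x - a))).comp (L : E →L[ℝ] F) :=
  (fderiv_comp_sub (f := f ∘ L) a).trans L.comp_right_fderiv

theorem fderiv_fun_const_mul_field_apply (c : ℝ) (f : E → ℝ) (x e : E) :
    fderiv ℝ (fun y => c * f y) x e = c * fderiv ℝ f x e :=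
  congrFun (congrArg DFunLike.coe (congrFun (fderiv_const_smul_field (𝕜 := ℝ) (f := f) c) x)) e

theorem fderiv_const_mul_add_const_mul_apply {g h : E → ℝ} {x : E}
    (hg : DifferentiableAt ℝ g x) (hh : DifferentiableAt ℝ h x) (a b : ℝ) (e : E) :
    fderiv ℝ (fun y => a * g y + b * h y) x e = a * fderiv ℝ g x e + b * fderiv ℝ h x e := by
  rw [fderiv_fun_add (hg.const_mul a) (hh.const_mul b), fderiv_const_mul hg,
    fderiv_const_mul hh]
  rfl

theorem differentiable_fderiv_apply {f : E → ℝ} (hf : ContDiff ℝ 2 f) (e : E) :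
    Differentiable ℝ (fun x => fderiv ℝ f x e) :=
  ((hf.fderiv_right (m := 1) (by norm_num)).clm_apply contDiff_const).differentiable
    (by norm_num)

end Calculus

theorem fderiv_apply_triple (f : ℝ × ℝ × ℝ → ℝ) (p : ℝ × ℝ × ℝ) (a b c : ℝ) :
    fderiv ℝ f p (a, b, c) = a * pdT f p + b * pdX f p + c * pdY f p := by
  have : ((a, b, c) : ℝ × ℝ × ℝ) = a • (1, 0, 0) + b • (0, 1, 0) + c • (0, 0, 1) := by
    simp
  rw [this, map_add, map_add, map_smul, map_smul, map_smul]
  rfl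

theorem fderiv_apply_pair (Ψ : ℝ × ℝ → ℝ) (q : ℝ × ℝ) (a b : ℝ) :
    fderiv ℝ Ψ q (a, b) = a * psiX Ψ q + b * psiY Ψ q := by
  have : ((a, b) : ℝ × ℝ) = a • (1, 0) + b • (0, 1) := by simp
  rw [this, map_add, map_smul, map_smul]
  rfl

noncomputable def convectiveDeriv (Ψ : ℝ × ℝ → ℝ) (f : ℝ × ℝ × ℝ → ℝ) (p : ℝ × ℝ × ℝ) : ℝ :=
  pdT f p + psiY Ψ p.2 * pdX f p - psiX Ψ p.2 * pdY f p

noncomputable def laplacian (f : ℝ × ℝ × ℝ → ℝ) (p : ℝ × ℝ × ℝ) : ℝ :=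
  pdX (pdX f) p + pdY (pdY f) p

theorem solvesS_iff (Ψ : ℝ × ℝ → ℝ) (d₁ d₂ d₃ k : ℝ) (u v w : ℝ × ℝ × ℝ → ℝ)
    (Ω : Set (ℝ × ℝ × ℝ)) :
    SolvesS Ψ d₁ d₂ d₃ k u v w Ω ↔ ∀ p ∈ Ω,
      convectiveDeriv Ψ u p = d₁ * laplacian u p - k * u p * v p ∧
      convectiveDeriv Ψ v p = d₂ * laplacian v p - k * u p * v p ∧
      convectiveDeriv Ψ w p = d₃ * laplacian w p + k * u p * v p :=
  Iff.rfl

theorem pdT_const_mul (c : ℝ) (f : ℝ × ℝ × ℝ → ℝ) :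
    pdT (fun p => c * f p) = fun p => c * pdT f p :=
  funext fun p => fderiv_fun_const_mul_field_apply c f p _

theorem pdX_const_mul (c : ℝ) (f : ℝ × ℝ × ℝ → ℝ) :
    pdX (fun p => c * f p) = fun p => c * pdX f p :=
  funext fun p => fderiv_fun_const_mul_field_apply c f p _

theorem pdY_const_mul (c : ℝ) (f : ℝ × ℝ × ℝ → ℝ) :
    pdY (fun p => c * f p) = fun p => c * pdY f p :=
  funext fun p => fderiv_fun_const_mul_field_apply c f p _

theorem convectiveDeriv_const_mul (Ψ : ℝ × ℝ → ℝ) (c : ℝ) (f : ℝ × ℝ × ℝ → ℝ)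
    (p : ℝ × ℝ × ℝ) :
    convectiveDeriv Ψ (fun p => c * f p) p = c * convectiveDeriv Ψ f p := by
  simp only [convectiveDeriv, pdT_const_mul, pdX_const_mul, pdY_const_mul]
  ring

theorem laplacian_const_mul (c : ℝ) (f : ℝ × ℝ × ℝ → ℝ) (p : ℝ × ℝ × ℝ) :
    laplacian (fun p => c * f p) p = c * laplacian f p := by
  simp only [laplacian, pdX_const_mul, pdY_const_mul]
  ring

theorem SolvesS.const_mul {Ψ : ℝ × ℝ → ℝ} {d₁ d₂ d₃ k c : ℝ} {u v w : ℝ × ℝ × ℝ → ℝ}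
    {Ω : Set (ℝ × ℝ × ℝ)} (h : SolvesS Ψ d₁ d₂ d₃ k u v w Ω) (hc : c ≠ 0) :
    SolvesS Ψ d₁ d₂ d₃ (k / c) (fun p => c * u p) (fun p => c * v p) (fun p => c * w p) Ω := by
  rw [solvesS_iff] at h ⊢
  intro p hp
  obtain ⟨hu, hv, hw⟩ := h p hp
  simp only [convectiveDeriv_const_mul, laplacian_const_mul, hu, hv, hw]
  refine ⟨?_, ?_, ?_⟩ <;> field_simp

noncomputable def sigmaInvEquiv (α₁ α₂ : ℝ) (hα : α₁ ^ 2 + α₂ ^ 2 ≠ 0) :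
    (ℝ × ℝ) ≃L[ℝ] ℝ × ℝ :=
  LinearEquiv.toContinuousLinearEquiv
    { toFun := sigmaInv α₁ α₂
      invFun := fun q => (α₁ * q.1 + α₂ * q.2, -α₂ * q.1 + α₁ * q.2)
      map_add' _ _ := by ext <;> simp only [sigmaInv, Prod.fst_add, Prod.snd_add] <;> ring
      map_smul' _ _ := by ext <;> simp only [sigmaInv, Prod.smul_fst, Prod.smul_snd, smul_eq_mul,
        RingHom.id_apply] <;> ring
      left_inv _ := by ext <;> simp only [sigmaInv] <;> field_simp <;> ring
      right_inv _ := by ext <;> simp only [sigmaInv] <;> field_simp <;> ring }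

noncomputable def tinvEquiv (α₀ α₁ α₂ : ℝ) (hα₀ : α₀ ≠ 0) (hα : α₁ ^ 2 + α₂ ^ 2 ≠ 0) :
    (ℝ × ℝ × ℝ) ≃L[ℝ] ℝ × ℝ × ℝ :=
  (LinearEquiv.smulOfNeZero ℝ ℝ α₀⁻¹ (inv_ne_zero hα₀)).toContinuousLinearEquiv.prodCongr
    (sigmaInvEquiv α₁ α₂ hα)

theorem sigmaInvEquiv_apply (α₁ α₂ : ℝ) (hα : α₁ ^ 2 + α₂ ^ 2 ≠ 0) (q : ℝ × ℝ) :
    sigmaInvEquiv α₁ α₂ hα q = sigmaInv α₁ α₂ q := rfl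

theorem tinvEquiv_apply (α₀ α₁ α₂ : ℝ) (hα₀ : α₀ ≠ 0) (hα : α₁ ^ 2 + α₂ ^ 2 ≠ 0)
    (p : ℝ × ℝ × ℝ) :
    tinvEquiv α₀ α₁ α₂ hα₀ hα p = (p.1 / α₀, sigmaInv α₁ α₂ p.2) := by
  simp [tinvEquiv, sigmaInvEquiv_apply, div_eq_inv_mul]

theorem Tinv_eq_tinvEquiv (α₀ α₁ α₂ t₀ x₀ y₀ : ℝ) (hα₀ : α₀ ≠ 0) (hα : α₁ ^ 2 + α₂ ^ 2 ≠ 0) :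
    Tinv α₀ α₁ α₂ t₀ x₀ y₀ = fun p => tinvEquiv α₀ α₁ α₂ hα₀ hα (p - (t₀, x₀, y₀)) := by
  ext1 p
  rw [tinvEquiv_apply]
  rfl

theorem Tinv_snd (α₀ α₁ α₂ t₀ x₀ y₀ : ℝ) (p : ℝ × ℝ × ℝ) :
    (Tinv α₀ α₁ α₂ t₀ x₀ y₀ p).2 = sigmaInv α₁ α₂ (p.2.1 - x₀, p.2.2 - y₀) :=
  rfl

section ChangeOfVariables

variable (α₀ α₁ α₂ t₀ x₀ y₀ : ℝ)

theorem fderiv_comp_Tinv_apply (hα₀ : α₀ ≠ 0) (hα : α₁ ^ 2 + α₂ ^ 2 ≠ 0)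
    (f : ℝ × ℝ × ℝ → ℝ) (p e : ℝ × ℝ × ℝ) :
    fderiv ℝ (fun p => f (Tinv α₀ α₁ α₂ t₀ x₀ y₀ p)) p e
      = fderiv ℝ f (Tinv α₀ α₁ α₂ t₀ x₀ y₀ p) (e.1 / α₀, sigmaInv α₁ α₂ e.2) := by
  rw [Tinv_eq_tinvEquiv α₀ α₁ α₂ t₀ x₀ y₀ hα₀ hα, fderiv_comp_linearEquiv_sub,
    ContinuousLinearMap.comp_apply, ContinuousLinearEquiv.coe_coe, tinvEquiv_apply _ _ _ _ _ e]

theorem pdT_comp_Tinv (hα₀ : α₀ ≠ 0) (hα : α₁ ^ 2 + α₂ ^ 2 ≠ 0)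
    (f : ℝ × ℝ × ℝ → ℝ) (p : ℝ × ℝ × ℝ) :
    pdT (fun p => f (Tinv α₀ α₁ α₂ t₀ x₀ y₀ p)) p = pdT f (Tinv α₀ α₁ α₂ t₀ x₀ y₀ p) / α₀ := by
  show fderiv ℝ _ p (1, 0, 0) = _
  rw [fderiv_comp_Tinv_apply α₀ α₁ α₂ t₀ x₀ y₀ hα₀ hα]
  simp [sigmaInv, fderiv_apply_triple, div_eq_inv_mul]

theorem pdX_comp_Tinv (hα₀ : α₀ ≠ 0) (hα : α₁ ^ 2 + α₂ ^ 2 ≠ 0)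
    (f : ℝ × ℝ × ℝ → ℝ) (p : ℝ × ℝ × ℝ) :
    pdX (fun p => f (Tinv α₀ α₁ α₂ t₀ x₀ y₀ p)) p
      = α₁ / (α₁ ^ 2 + α₂ ^ 2) * pdX f (Tinv α₀ α₁ α₂ t₀ x₀ y₀ p)
        + α₂ / (α₁ ^ 2 + α₂ ^ 2) * pdY f (Tinv α₀ α₁ α₂ t₀ x₀ y₀ p) := by
  show fderiv ℝ _ p (0, 1, 0) = _
  rw [fderiv_comp_Tinv_apply α₀ α₁ α₂ t₀ x₀ y₀ hα₀ hα]
  simp [sigmaInv, fderiv_apply_triple]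

theorem pdY_comp_Tinv (hα₀ : α₀ ≠ 0) (hα : α₁ ^ 2 + α₂ ^ 2 ≠ 0)
    (f : ℝ × ℝ × ℝ → ℝ) (p : ℝ × ℝ × ℝ) :
    pdY (fun p => f (Tinv α₀ α₁ α₂ t₀ x₀ y₀ p)) p
      = -α₂ / (α₁ ^ 2 + α₂ ^ 2) * pdX f (Tinv α₀ α₁ α₂ t₀ x₀ y₀ p)
        + α₁ / (α₁ ^ 2 + α₂ ^ 2) * pdY f (Tinv α₀ α₁ α₂ t₀ x₀ y₀ p) := by
  show fderiv ℝ _ p (0, 0, 1) = _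
  rw [fderiv_comp_Tinv_apply α₀ α₁ α₂ t₀ x₀ y₀ hα₀ hα]
  simp [sigmaInv, fderiv_apply_triple, neg_div]

theorem fderiv_comp_sigmaInv_apply (hα : α₁ ^ 2 + α₂ ^ 2 ≠ 0) (Ψ : ℝ × ℝ → ℝ) (q e : ℝ × ℝ) :
    fderiv ℝ (fun q => Ψ (sigmaInv α₁ α₂ (q.1 - x₀, q.2 - y₀))) q e
      = fderiv ℝ Ψ (sigmaInv α₁ α₂ (q.1 - x₀, q.2 - y₀)) (sigmaInv α₁ α₂ e) :=
  congrArg (· e) (fderiv_comp_linearEquiv_sub Ψ (sigmaInvEquiv α₁ α₂ hα) (x₀, y₀) q)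

theorem psiX_comp_sigmaInv (hα : α₁ ^ 2 + α₂ ^ 2 ≠ 0) (c : ℝ) (Ψ : ℝ × ℝ → ℝ) (q : ℝ × ℝ) :
    psiX (fun q => c * Ψ (sigmaInv α₁ α₂ (q.1 - x₀, q.2 - y₀))) q
      = c * (α₁ / (α₁ ^ 2 + α₂ ^ 2) * psiX Ψ (sigmaInv α₁ α₂ (q.1 - x₀, q.2 - y₀))
        + α₂ / (α₁ ^ 2 + α₂ ^ 2) * psiY Ψ (sigmaInv α₁ α₂ (q.1 - x₀, q.2 - y₀))) := by
  show fderiv ℝ _ q (1, 0) = _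
  rw [fderiv_fun_const_mul_field_apply, fderiv_comp_sigmaInv_apply α₁ α₂ x₀ y₀ hα]
  simp [sigmaInv, fderiv_apply_pair]

theorem psiY_comp_sigmaInv (hα : α₁ ^ 2 + α₂ ^ 2 ≠ 0) (c : ℝ) (Ψ : ℝ × ℝ → ℝ) (q : ℝ × ℝ) :
    psiY (fun q => c * Ψ (sigmaInv α₁ α₂ (q.1 - x₀, q.2 - y₀))) q
      = c * (-α₂ / (α₁ ^ 2 + α₂ ^ 2) * psiX Ψ (sigmaInv α₁ α₂ (q.1 - x₀, q.2 - y₀))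
        + α₁ / (α₁ ^ 2 + α₂ ^ 2) * psiY Ψ (sigmaInv α₁ α₂ (q.1 - x₀, q.2 - y₀))) := by
  show fderiv ℝ _ q (0, 1) = _
  rw [fderiv_fun_const_mul_field_apply, fderiv_comp_sigmaInv_apply α₁ α₂ x₀ y₀ hα]
  simp [sigmaInv, fderiv_apply_pair, neg_div]

theorem convectiveDeriv_comp_Tinv (hα₀ : α₀ ≠ 0) (hα : α₁ ^ 2 + α₂ ^ 2 ≠ 0)
    (Ψ : ℝ × ℝ → ℝ) (f : ℝ × ℝ × ℝ → ℝ) (p : ℝ × ℝ × ℝ) :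
    convectiveDeriv (fun q => ((α₁ ^ 2 + α₂ ^ 2) / α₀) * Ψ (sigmaInv α₁ α₂ (q.1 - x₀, q.2 - y₀)))
        (fun p => f (Tinv α₀ α₁ α₂ t₀ x₀ y₀ p)) p
      = convectiveDeriv Ψ f (Tinv α₀ α₁ α₂ t₀ x₀ y₀ p) / α₀ := by
  rw [convectiveDeriv, convectiveDeriv, psiX_comp_sigmaInv α₁ α₂ x₀ y₀ hα,
    psiY_comp_sigmaInv α₁ α₂ x₀ y₀ hα, pdT_comp_Tinv α₀ α₁ α₂ t₀ x₀ y₀ hα₀ hα,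
    pdX_comp_Tinv α₀ α₁ α₂ t₀ x₀ y₀ hα₀ hα, pdY_comp_Tinv α₀ α₁ α₂ t₀ x₀ y₀ hα₀ hα, Tinv_snd]
  field_simp
  ring

theorem laplacian_comp_Tinv (hα₀ : α₀ ≠ 0) (hα : α₁ ^ 2 + α₂ ^ 2 ≠ 0)
    {f : ℝ × ℝ × ℝ → ℝ} (hf : ContDiff ℝ 2 f) (p : ℝ × ℝ × ℝ) :
    laplacian (fun p => f (Tinv α₀ α₁ α₂ t₀ x₀ y₀ p)) p
      = laplacian f (Tinv α₀ α₁ α₂ t₀ x₀ y₀ p) / (α₁ ^ 2 + α₂ ^ 2) := by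
  have hT : Differentiable ℝ (Tinv α₀ α₁ α₂ t₀ x₀ y₀) := by
    rw [Tinv_eq_tinvEquiv α₀ α₁ α₂ t₀ x₀ y₀ hα₀ hα]
    fun_prop
  have hX : Differentiable ℝ (fun p => pdX f (Tinv α₀ α₁ α₂ t₀ x₀ y₀ p)) :=
    (differentiable_fderiv_apply hf _).comp hT
  have hY : Differentiable ℝ (fun p => pdY f (Tinv α₀ α₁ α₂ t₀ x₀ y₀ p)) :=
    (differentiable_fderiv_apply hf _).comp hT
  rw [laplacian, laplacian, funext (pdX_comp_Tinv α₀ α₁ α₂ t₀ x₀ y₀ hα₀ hα f),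
    funext (pdY_comp_Tinv α₀ α₁ α₂ t₀ x₀ y₀ hα₀ hα f)]
  show fderiv ℝ _ p (0, 1, 0) + fderiv ℝ _ p (0, 0, 1) = _
  rw [fderiv_const_mul_add_const_mul_apply (hX p) (hY p),
    fderiv_const_mul_add_const_mul_apply (hX p) (hY p)]
  simp only [fderiv_comp_Tinv_apply α₀ α₁ α₂ t₀ x₀ y₀ hα₀ hα]
  simp only [sigmaInv, fderiv_apply_triple]
  field_simp
  ring

theorem SolvesS.comp_Tinv {Ψ : ℝ × ℝ → ℝ} {d₁ d₂ d₃ k : ℝ} {u v w : ℝ × ℝ × ℝ → ℝ}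
    (h : SolvesS Ψ d₁ d₂ d₃ k u v w Set.univ) (α₀ α₁ α₂ t₀ x₀ y₀ : ℝ)
    (hα₀ : α₀ ≠ 0) (hα : α₁ ^ 2 + α₂ ^ 2 ≠ 0)
    (hu : ContDiff ℝ 2 u) (hv : ContDiff ℝ 2 v) (hw : ContDiff ℝ 2 w) :
    SolvesS
      (fun q => ((α₁ ^ 2 + α₂ ^ 2) / α₀) * Ψ (sigmaInv α₁ α₂ (q.1 - x₀, q.2 - y₀)))
      (((α₁ ^ 2 + α₂ ^ 2) / α₀) * d₁) (((α₁ ^ 2 + α₂ ^ 2) / α₀) * d₂)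
      (((α₁ ^ 2 + α₂ ^ 2) / α₀) * d₃) (k / α₀)
      (fun p => u (Tinv α₀ α₁ α₂ t₀ x₀ y₀ p)) (fun p => v (Tinv α₀ α₁ α₂ t₀ x₀ y₀ p))
      (fun p => w (Tinv α₀ α₁ α₂ t₀ x₀ y₀ p)) Set.univ := by
  rw [solvesS_iff] at h ⊢
  intro p _
  obtain ⟨hu', hv', hw'⟩ := h (Tinv α₀ α₁ α₂ t₀ x₀ y₀ p) trivial
  simp only [convectiveDeriv_comp_Tinv α₀ α₁ α₂ t₀ x₀ y₀ hα₀ hα,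
    laplacian_comp_Tinv α₀ α₁ α₂ t₀ x₀ y₀ hα₀ hα hu,
    laplacian_comp_Tinv α₀ α₁ α₂ t₀ x₀ y₀ hα₀ hα hv,
    laplacian_comp_Tinv α₀ α₁ α₂ t₀ x₀ y₀ hα₀ hα hw, hu', hv', hw']
  refine ⟨?_, ?_, ?_⟩ <;> field_simp

end ChangeOfVariables

theorem continuous_equivalence_transformations_general
    (α₀ α₁ α₂ α₃ t₀ x₀ y₀ d₁ d₂ d₃ k : ℝ)
    (hα₀ : 0 < α₀) (hα₃ : 0 < α₃) (hα : α₁ ^ 2 + α₂ ^ 2 ≠ 0)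
    (Ψ : ℝ × ℝ → ℝ)
    (u v w : ℝ × ℝ × ℝ → ℝ)
    (hu : ContDiff ℝ 2 u) (hv : ContDiff ℝ 2 v) (hw : ContDiff ℝ 2 w)
    (h : SolvesS Ψ d₁ d₂ d₃ k u v w Set.univ) :
    SolvesS
      (fun q => ((α₁ ^ 2 + α₂ ^ 2) / α₀) * Ψ (sigmaInv α₁ α₂ (q.1 - x₀, q.2 - y₀)))
      (((α₁ ^ 2 + α₂ ^ 2) / α₀) * d₁)
      (((α₁ ^ 2 + α₂ ^ 2) / α₀) * d₂)
      (((α₁ ^ 2 + α₂ ^ 2) / α₀) * d₃)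
      (k / (α₀ * α₃))
      (fun p => α₃ * u (Tinv α₀ α₁ α₂ t₀ x₀ y₀ p))
      (fun p => α₃ * v (Tinv α₀ α₁ α₂ t₀ x₀ y₀ p))
      (fun p => α₃ * w (Tinv α₀ α₁ α₂ t₀ x₀ y₀ p))
      Set.univ := by
  rw [← div_div]
  exact (h.comp_Tinv α₀ α₁ α₂ t₀ x₀ y₀ hα₀.ne' hα hu hv hw).const_mul hα₃.ne'

/-- Continuous equivalence transformations (Theorem 1): if `(u,v,w)` solves
`S(Ψ; d₁,d₂,d₃; k)` on `ℝ³`, then with `λ = (α₁²+α₂²)/α₀`, the triple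
`(α₃·u∘T⁻¹, α₃·v∘T⁻¹, α₃·w∘T⁻¹)` solves `S(Ψ*; λd₁, λd₂, λd₃; k/(α₀α₃))` on `ℝ³`,
where `Ψ*(X,Y) = λ·Ψ(σ⁻¹(X−x₀, Y−y₀))`. -/
theorem continuous_equivalence_transformations
    (α₀ α₁ α₂ α₃ t₀ x₀ y₀ d₁ d₂ d₃ k : ℝ)
    (hα₀ : 0 < α₀) (hα₃ : 0 < α₃) (hα : α₁ ^ 2 + α₂ ^ 2 ≠ 0)
    (Ψ : ℝ × ℝ → ℝ) (hΨ : ContDiff ℝ 1 Ψ)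
    (u v w : ℝ × ℝ × ℝ → ℝ)
    (hu : ContDiff ℝ 2 u) (hv : ContDiff ℝ 2 v) (hw : ContDiff ℝ 2 w)
    (h : SolvesS Ψ d₁ d₂ d₃ k u v w Set.univ) :
    SolvesS
      (fun q => ((α₁ ^ 2 + α₂ ^ 2) / α₀) * Ψ (sigmaInv α₁ α₂ (q.1 - x₀, q.2 - y₀)))
      (((α₁ ^ 2 + α₂ ^ 2) / α₀) * d₁)
      (((α₁ ^ 2 + α₂ ^ 2) / α₀) * d₂)
      (((α₁ ^ 2 + α₂ ^ 2) / α₀) * d₃)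
      (k / (α₀ * α₃))
      (fun p => α₃ * u (Tinv α₀ α₁ α₂ t₀ x₀ y₀ p))
      (fun p => α₃ * v (Tinv α₀ α₁ α₂ t₀ x₀ y₀ p))
      (fun p => α₃ * w (Tinv α₀ α₁ α₂ t₀ x₀ y₀ p))
      Set.univ :=
  continuous_equivalence_transformations_general α₀ α₁ α₂ α₃ t₀ x₀ y₀ d₁ d₂ d₃ k hα₀ hα₃ hα Ψ u v w
    hu hv hw h
end

section
/- Finite symmetry generated by P₁ = sin(2t)∂_x + cos(2t)∂_y (Case 10 of Table 1): Suppose the C² triple (u, v, w) solves system (2-23), i.e. u_t + 2y u_x − 2x u_y = d₁(u_xx + u_yy) − uv, v_t + 2y v_x − 2x v_y = d₂(v_xx + v_yy) − uv, w_t + 2y w_x − 2x w_y = d₃(w_xx + w_yy) + uv, on all of ℝ³. Then for every real ε, the triple of functions (t,x,y) ↦ u(t, x + ε·sin 2t, y + ε·cos 2t), (t,x,y) ↦ v(t, x + ε·sin 2t, y + ε·cos 2t), (t,x,y) ↦ w(t, x + ε·sin 2t, y + ε·cos 2t) also solves system (2-23) on ℝ³. -/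
/-- `(u,v,w)` solves system (2-23), the convective Lotka–Volterra system with
stream function `Ψ = x² + y²` and `k = 1`, on `Ω`. -/
def Solves223 (d₁ d₂ d₃ : ℝ) (u v w : ℝ × ℝ × ℝ → ℝ) (Ω : Set (ℝ × ℝ × ℝ)) : Prop :=
  ∀ p ∈ Ω,
    (pdT u p + 2 * p.2.2 * pdX u p - 2 * p.2.1 * pdY u p
      = d₁ * (pdX (pdX u) p + pdY (pdY u) p) - u p * v p) ∧
    (pdT v p + 2 * p.2.2 * pdX v p - 2 * p.2.1 * pdY v p
      = d₂ * (pdX (pdX v) p + pdY (pdY v) p) - u p * v p) ∧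
    (pdT w p + 2 * p.2.2 * pdX w p - 2 * p.2.1 * pdY w p
      = d₃ * (pdX (pdX w) p + pdY (pdY w) p) + u p * v p)

/-!
The shift `(t, x, y) ↦ (t, x + a t, y + b t)` leaves `∂ₓ` and `∂_y` unchanged and turns `∂ₜ` into
`∂ₜ + a' ∂ₓ + b' ∂_y`. When `(a, b)` is a trajectory `a' = 2b`, `b' = -2a` of the convective field
`(2y, -2x)`, the extra terms cancel the change of the coefficients `2y`, `-2x`, so the convective
derivative and the Laplacian both commute with the shift. The curve `ε (sin 2t, cos 2t)` is such a
trajectory.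
-/

def shiftAlong (a b : ℝ → ℝ) (p : ℝ × ℝ × ℝ) : ℝ × ℝ × ℝ := (p.1, p.2.1 + a p.1, p.2.2 + b p.1)

section shiftAlong

variable {a b : ℝ → ℝ} {a' b' : ℝ} {p : ℝ × ℝ × ℝ}

theorem hasFDerivAt_shiftAlong (ha : HasDerivAt a a' p.1) (hb : HasDerivAt b b' p.1) :
    HasFDerivAt (shiftAlong a b)
      (ContinuousLinearMap.id ℝ _ +
        ((ContinuousLinearMap.smulRight (1 : ℝ →L[ℝ] ℝ) ((0 : ℝ), a', b')).comp
          (ContinuousLinearMap.fst ℝ ℝ (ℝ × ℝ)))) p := by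
  have hshift : shiftAlong a b = fun q => q + ((0 : ℝ), a q.1, b q.1) := by
    funext q
    simp [shiftAlong, Prod.ext_iff]
  rw [hshift]
  exact (hasFDerivAt_id p).add
    (((hasDerivAt_const p.1 (0 : ℝ)).prodMk (ha.prodMk hb)).hasFDerivAt.comp p hasFDerivAt_fst)

variable {f : ℝ × ℝ × ℝ → ℝ}

theorem fderiv_comp_shiftAlong (ha : HasDerivAt a a' p.1) (hb : HasDerivAt b b' p.1)
    (hf : DifferentiableAt ℝ f (shiftAlong a b p)) (v : ℝ × ℝ × ℝ) :
    fderiv ℝ (f ∘ shiftAlong a b) p v =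
      fderiv ℝ f (shiftAlong a b p) (v + v.1 • ((0 : ℝ), a', b')) := by
  rw [(hf.hasFDerivAt.comp p (hasFDerivAt_shiftAlong ha hb)).fderiv]
  simp

theorem pdT_comp_shiftAlong (ha : HasDerivAt a a' p.1) (hb : HasDerivAt b b' p.1)
    (hf : DifferentiableAt ℝ f (shiftAlong a b p)) :
    pdT (f ∘ shiftAlong a b) p =
      pdT f (shiftAlong a b p) + a' * pdX f (shiftAlong a b p) + b' * pdY f (shiftAlong a b p) := by
  have hsplit : ((1 : ℝ), (0 : ℝ), (0 : ℝ)) + (1 : ℝ) • ((0 : ℝ), a', b') =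
      ((1, 0, 0) + a' • (0, 1, 0) + b' • (0, 0, 1) : ℝ × ℝ × ℝ) := by
    simp
  rw [pdT, fderiv_comp_shiftAlong ha hb hf, hsplit, map_add, map_add, map_smul, map_smul]
  rfl

theorem pdX_comp_shiftAlong (ha : HasDerivAt a a' p.1) (hb : HasDerivAt b b' p.1)
    (hf : DifferentiableAt ℝ f (shiftAlong a b p)) :
    pdX (f ∘ shiftAlong a b) p = pdX f (shiftAlong a b p) := by
  rw [pdX, fderiv_comp_shiftAlong ha hb hf]
  simp [pdX]

theorem pdY_comp_shiftAlong (ha : HasDerivAt a a' p.1) (hb : HasDerivAt b b' p.1)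
    (hf : DifferentiableAt ℝ f (shiftAlong a b p)) :
    pdY (f ∘ shiftAlong a b) p = pdY f (shiftAlong a b p) := by
  rw [pdY, fderiv_comp_shiftAlong ha hb hf]
  simp [pdY]

theorem differentiable_pdX (hf : ContDiff ℝ 2 f) : Differentiable ℝ (pdX f) :=
  ((hf.fderiv_right (by norm_num)).differentiable one_ne_zero).clm_apply (differentiable_const _)

theorem differentiable_pdY (hf : ContDiff ℝ 2 f) : Differentiable ℝ (pdY f) :=
  ((hf.fderiv_right (by norm_num)).differentiable one_ne_zero).clm_apply (differentiable_const _)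

theorem convective_comp_shiftAlong (ha : ∀ t, HasDerivAt a (2 * b t) t)
    (hb : ∀ t, HasDerivAt b (-(2 * a t)) t) (hf : DifferentiableAt ℝ f (shiftAlong a b p)) :
    pdT (f ∘ shiftAlong a b) p + 2 * p.2.2 * pdX (f ∘ shiftAlong a b) p
        - 2 * p.2.1 * pdY (f ∘ shiftAlong a b) p =
      pdT f (shiftAlong a b p) + 2 * (shiftAlong a b p).2.2 * pdX f (shiftAlong a b p)
        - 2 * (shiftAlong a b p).2.1 * pdY f (shiftAlong a b p) := by
  rw [pdT_comp_shiftAlong (ha p.1) (hb p.1) hf, pdX_comp_shiftAlong (ha p.1) (hb p.1) hf,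
    pdY_comp_shiftAlong (ha p.1) (hb p.1) hf]
  simp only [shiftAlong]
  ring

theorem laplacian_comp_shiftAlong (ha : ∀ t, HasDerivAt a (2 * b t) t)
    (hb : ∀ t, HasDerivAt b (-(2 * a t)) t) (hf : ContDiff ℝ 2 f) :
    pdX (pdX (f ∘ shiftAlong a b)) p + pdY (pdY (f ∘ shiftAlong a b)) p =
      pdX (pdX f) (shiftAlong a b p) + pdY (pdY f) (shiftAlong a b p) := by
  have hf' : Differentiable ℝ f := hf.differentiable (by norm_num)
  have hX : pdX (f ∘ shiftAlong a b) = pdX f ∘ shiftAlong a b :=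
    funext fun q => pdX_comp_shiftAlong (ha q.1) (hb q.1) (hf' _)
  have hY : pdY (f ∘ shiftAlong a b) = pdY f ∘ shiftAlong a b :=
    funext fun q => pdY_comp_shiftAlong (ha q.1) (hb q.1) (hf' _)
  rw [hX, hY, pdX_comp_shiftAlong (ha p.1) (hb p.1) (differentiable_pdX hf _),
    pdY_comp_shiftAlong (ha p.1) (hb p.1) (differentiable_pdY hf _)]

theorem Solves223.comp_shiftAlong {d₁ d₂ d₃ : ℝ} {u v w : ℝ × ℝ × ℝ → ℝ} {Ω : Set (ℝ × ℝ × ℝ)}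
    (hu : ContDiff ℝ 2 u) (hv : ContDiff ℝ 2 v) (hw : ContDiff ℝ 2 w)
    (h : Solves223 d₁ d₂ d₃ u v w Ω) (ha : ∀ t, HasDerivAt a (2 * b t) t)
    (hb : ∀ t, HasDerivAt b (-(2 * a t)) t) :
    Solves223 d₁ d₂ d₃ (u ∘ shiftAlong a b) (v ∘ shiftAlong a b) (w ∘ shiftAlong a b)
      (shiftAlong a b ⁻¹' Ω) := by
  intro p hp
  obtain ⟨hequ, heqv, heqw⟩ := h (shiftAlong a b p) hp
  rw [convective_comp_shiftAlong ha hb (hu.differentiable (by norm_num) _),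
    convective_comp_shiftAlong ha hb (hv.differentiable (by norm_num) _),
    convective_comp_shiftAlong ha hb (hw.differentiable (by norm_num) _),
    laplacian_comp_shiftAlong ha hb hu, laplacian_comp_shiftAlong ha hb hv,
    laplacian_comp_shiftAlong ha hb hw]
  exact ⟨hequ, heqv, heqw⟩

end shiftAlong

/-- Finite symmetry generated by `P₁ = sin(2t)∂_x + cos(2t)∂_y` (Case 10 of Table 1):
if `(u,v,w)` solves system (2-23) on `ℝ³`, then for every real `ε` the shifted triple
`(t,x,y) ↦ (u,v,w)(t, x + ε sin 2t, y + ε cos 2t)` also solves (2-23) on `ℝ³`. -/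
theorem finite_symmetry_P1
    (d₁ d₂ d₃ : ℝ) (u v w : ℝ × ℝ × ℝ → ℝ)
    (hu : ContDiff ℝ 2 u) (hv : ContDiff ℝ 2 v) (hw : ContDiff ℝ 2 w)
    (h : Solves223 d₁ d₂ d₃ u v w Set.univ) :
    ∀ ε : ℝ,
      Solves223 d₁ d₂ d₃
        (fun p => u (p.1, p.2.1 + ε * Real.sin (2 * p.1), p.2.2 + ε * Real.cos (2 * p.1)))
        (fun p => v (p.1, p.2.1 + ε * Real.sin (2 * p.1), p.2.2 + ε * Real.cos (2 * p.1)))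
        (fun p => w (p.1, p.2.1 + ε * Real.sin (2 * p.1), p.2.2 + ε * Real.cos (2 * p.1)))
        Set.univ := by
  intro ε
  have ha (t : ℝ) : HasDerivAt (fun t => ε * Real.sin (2 * t)) (2 * (ε * Real.cos (2 * t))) t := by
    refine ((((hasDerivAt_id' t).const_mul 2).sin).const_mul ε).congr_deriv ?_
    ring
  have hb (t : ℝ) :
      HasDerivAt (fun t => ε * Real.cos (2 * t)) (-(2 * (ε * Real.sin (2 * t)))) t := by
    refine ((((hasDerivAt_id' t).const_mul 2).cos).const_mul ε).congr_deriv ?_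
    ring
  exact h.comp_shiftAlong hu hv hw ha hb
end

section
/- Exact solution (3-56) of system (2-23): Let d₁, d₂, d₃ be real constants with d₃ ≠ 0, and let α₁, α₂, C₁, C₃, C₄ be real constants. Define φ(t,x,y) = (α₁x + α₂y)·sin 2t + (α₁y − α₂x)·cos 2t + C₁. On the open set Ω = {(t,x,y) ∈ ℝ³ : φ(t,x,y) ≠ 0}, the functions u = 6d₂(α₁² + α₂²)·φ⁻², v = 6d₁(α₁² + α₂²)·φ⁻², w = ((α₁² + α₂²)/d₃)·(−6d₁d₂·φ⁻² + C₃·(φ − C₁) + C₄) satisfy system (2-23): u_t + 2y u_x − 2x u_y = d₁(u_xx + u_yy) − uv, v_t + 2y v_x − 2x v_y = d₂(v_xx + v_yy) − uv, w_t + 2y w_x − 2x w_y = d₃(w_xx + w_yy) + uv, at every point of Ω. -/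
/-- The phase `φ(t,x,y) = (α₁x + α₂y)·sin 2t + (α₁y − α₂x)·cos 2t + C₁`. -/
noncomputable def phi (α₁ α₂ C₁ : ℝ) (p : ℝ × ℝ × ℝ) : ℝ :=
  (α₁ * p.2.1 + α₂ * p.2.2) * Real.sin (2 * p.1)
    + (α₁ * p.2.2 - α₂ * p.2.1) * Real.cos (2 * p.1) + C₁

/-! All three functions are profiles `F ∘ φ` with `F s = a s⁻² + b s + c`. The phase `φ` is a
first integral of the rotation `(ẋ, ẏ) = (2y, -2x)`, so its convective derivative vanishes; it is
harmonic in `(x, y)` and `|∇φ|² = α₁² + α₂²`. By the chain rule the convective derivative of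
`F ∘ φ` vanishes as well, and its Laplacian is `F''(φ) (α₁² + α₂²) = 6a (α₁² + α₂²) φ⁻⁴`, so the
system reduces to algebraic identities between the coefficients. -/

open Filter Topology Real

noncomputable def convDeriv (f : ℝ × ℝ × ℝ → ℝ) (p : ℝ × ℝ × ℝ) : ℝ :=
  pdT f p + 2 * p.2.2 * pdX f p - 2 * p.2.1 * pdY f p

noncomputable def lapXY (f : ℝ × ℝ × ℝ → ℝ) (p : ℝ × ℝ × ℝ) : ℝ :=
  pdX (pdX f) p + pdY (pdY f) p

theorem solves223_iff {d₁ d₂ d₃ : ℝ} {u v w : ℝ × ℝ × ℝ → ℝ} {Ω : Set (ℝ × ℝ × ℝ)} :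
    Solves223 d₁ d₂ d₃ u v w Ω ↔ ∀ p ∈ Ω,
      convDeriv u p = d₁ * lapXY u p - u p * v p ∧
      convDeriv v p = d₂ * lapXY v p - u p * v p ∧
      convDeriv w p = d₃ * lapXY w p + u p * v p :=
  Iff.rfl

section ChainRule

variable {E : Type*} [NormedAddCommGroup E] [NormedSpace ℝ E] {f : E → ℝ} {g : ℝ → ℝ} {p : E}

theorem fderiv_comp_apply_of_hasDerivAt {g' : ℝ} (hg : HasDerivAt g g' (f p))
    (hf : DifferentiableAt ℝ f p) (v : E) :
    fderiv ℝ (g ∘ f) p v = g' * fderiv ℝ f p v := by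
  rw [(hg.comp_hasFDerivAt p hf.hasFDerivAt).fderiv]
  rfl

theorem fderiv_fderiv_comp_apply_of_hasDerivAt {g' : ℝ → ℝ} {g'' : ℝ} (hf : ContDiff ℝ 2 f)
    (hg : ∀ᶠ s in 𝓝 (f p), HasDerivAt g (g' s) s) (hg' : HasDerivAt g' g'' (f p)) (v : E) :
    fderiv ℝ (fun q => fderiv ℝ (g ∘ f) q v) p v
      = g'' * fderiv ℝ f p v ^ 2 + g' (f p) * fderiv ℝ (fun q => fderiv ℝ f q v) p v := by
  have hf₁ : Differentiable ℝ f := hf.differentiable two_ne_zero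
  have hfv : DifferentiableAt ℝ (fun q => fderiv ℝ f q v) p :=
    ((hf.fderiv_right (m := 1) le_rfl).clm_apply contDiff_const).differentiable one_ne_zero p
  have hchain : (fun q => fderiv ℝ (g ∘ f) q v) =ᶠ[𝓝 p] fun q => g' (f q) * fderiv ℝ f q v := by
    filter_upwards [hf₁.continuous.continuousAt.eventually hg] with q hq
    exact fderiv_comp_apply_of_hasDerivAt hq (hf₁ q) v
  have hg'f : HasFDerivAt (fun q => g' (f q)) (g'' • fderiv ℝ f p) p :=
    hg'.comp_hasFDerivAt p (hf₁ p).hasFDerivAt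
  rw [hchain.fderiv_eq, (hg'f.fun_mul hfv.hasFDerivAt).fderiv]
  simp only [add_apply, smul_apply, smul_eq_mul]
  ring

end ChainRule

theorem convDeriv_comp {f : ℝ × ℝ × ℝ → ℝ} {g : ℝ → ℝ} {g' : ℝ} {p : ℝ × ℝ × ℝ}
    (hg : HasDerivAt g g' (f p)) (hf : DifferentiableAt ℝ f p) :
    convDeriv (g ∘ f) p = g' * convDeriv f p := by
  simp only [convDeriv, pdT, pdX, pdY, fderiv_comp_apply_of_hasDerivAt hg hf]
  ring

theorem lapXY_comp {f : ℝ × ℝ × ℝ → ℝ} {g g' : ℝ → ℝ} {g'' : ℝ} {p : ℝ × ℝ × ℝ}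
    (hf : ContDiff ℝ 2 f) (hg : ∀ᶠ s in 𝓝 (f p), HasDerivAt g (g' s) s)
    (hg' : HasDerivAt g' g'' (f p)) :
    lapXY (g ∘ f) p = g'' * (pdX f p ^ 2 + pdY f p ^ 2) + g' (f p) * lapXY f p := by
  unfold lapXY pdX pdY
  simp only [fderiv_fderiv_comp_apply_of_hasDerivAt hf hg hg']
  ring

section Phase

variable (α₁ α₂ C₁ : ℝ)

theorem contDiff_phi {n : WithTop ℕ∞} : ContDiff ℝ n (phi α₁ α₂ C₁) := by
  unfold phi
  fun_prop

theorem fderiv_phi_apply (p v : ℝ × ℝ × ℝ) :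
    fderiv ℝ (phi α₁ α₂ C₁) p v =
      2 * ((α₁ * p.2.1 + α₂ * p.2.2) * cos (2 * p.1)
          - (α₁ * p.2.2 - α₂ * p.2.1) * sin (2 * p.1)) * v.1
        + (α₁ * sin (2 * p.1) - α₂ * cos (2 * p.1)) * v.2.1
        + (α₂ * sin (2 * p.1) + α₁ * cos (2 * p.1)) * v.2.2 := by
  unfold phi
  simp (disch := fun_prop) only [fderiv_add_const, fderiv_fun_add, fderiv_fun_mul, fderiv_sin,
    fderiv.fst, fderiv_fun_id, ContinuousLinearMap.comp_id, fderiv_fun_const, Pi.zero_apply,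
    smul_zero, add_zero, fderiv.snd, smul_add, fderiv_cos, neg_smul, smul_neg, fderiv_fun_sub,
    add_apply, smul_apply, ContinuousLinearMap.coe_fst', smul_eq_mul,
    ContinuousLinearMap.comp_apply, ContinuousLinearMap.coe_snd', neg_apply, sub_apply]
  ring

theorem convDeriv_phi (p : ℝ × ℝ × ℝ) : convDeriv (phi α₁ α₂ C₁) p = 0 := by
  simp only [convDeriv, pdT, pdX, pdY, fderiv_phi_apply]
  ring

theorem pdX_phi_sq_add_pdY_phi_sq (p : ℝ × ℝ × ℝ) :
    pdX (phi α₁ α₂ C₁) p ^ 2 + pdY (phi α₁ α₂ C₁) p ^ 2 = α₁ ^ 2 + α₂ ^ 2 := by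
  simp only [pdX, pdY, fderiv_phi_apply]
  linear_combination (α₁ ^ 2 + α₂ ^ 2) * sin_sq_add_cos_sq (2 * p.1)

theorem lapXY_phi (p : ℝ × ℝ × ℝ) : lapXY (phi α₁ α₂ C₁) p = 0 := by
  have hX : pdX (phi α₁ α₂ C₁) = (fun t => α₁ * sin (2 * t) - α₂ * cos (2 * t)) ∘ Prod.fst :=
    funext fun q => by simp [pdX, fderiv_phi_apply]
  have hY : pdY (phi α₁ α₂ C₁) = (fun t => α₂ * sin (2 * t) + α₁ * cos (2 * t)) ∘ Prod.fst :=
    funext fun q => by simp [pdY, fderiv_phi_apply]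
  have hfst {h : ℝ → ℝ} (hh : Differentiable ℝ h) (w : ℝ × ℝ) :
      fderiv ℝ (h ∘ Prod.fst) p (0, w) = 0 := by
    simp [fderiv_comp_apply_of_hasDerivAt (hh p.1).hasDerivAt differentiableAt_fst, fderiv_fst]
  rw [lapXY, hX, hY, pdX, pdY, hfst (by fun_prop), hfst (by fun_prop), add_zero]

end Phase

section Profile

variable (a b c : ℝ) {s : ℝ}

theorem hasDerivAt_invSqProfile (hs : s ≠ 0) :
    HasDerivAt (fun s => a * (s ^ 2)⁻¹ + b * s + c) (-2 * a * (s ^ 3)⁻¹ + b) s := by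
  have h : HasDerivAt (fun s => a * (s ^ 2)⁻¹ + b * s + c)
      (a * (-(↑2 * s ^ (2 - 1)) / (s ^ 2) ^ 2) + b * 1) s :=
    ((((hasDerivAt_pow 2 s).inv (pow_ne_zero 2 hs)).const_mul a).add
      ((hasDerivAt_id s).const_mul b)).add_const c
  convert h using 1
  field_simp
  ring

theorem hasDerivAt_invCubeProfile (hs : s ≠ 0) :
    HasDerivAt (fun s => -2 * a * (s ^ 3)⁻¹ + b) (6 * a * (s ^ 4)⁻¹) s := by
  have h : HasDerivAt (fun s => -2 * a * (s ^ 3)⁻¹ + b)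
      (-2 * a * (-(↑3 * s ^ (3 - 1)) / (s ^ 3) ^ 2)) s :=
    (((hasDerivAt_pow 3 s).inv (pow_ne_zero 3 hs)).const_mul (-2 * a)).add_const b
  convert h using 1
  field_simp
  ring

variable {α₁ α₂ C₁ : ℝ} {p : ℝ × ℝ × ℝ}

theorem convDeriv_invSqProfile_phi (hp : phi α₁ α₂ C₁ p ≠ 0) :
    convDeriv (fun q => a * (phi α₁ α₂ C₁ q ^ 2)⁻¹ + b * phi α₁ α₂ C₁ q + c) p = 0 :=
  (convDeriv_comp (hasDerivAt_invSqProfile a b c hp)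
    ((contDiff_phi α₁ α₂ C₁ (n := 1)).differentiable one_ne_zero p)).trans
    (by rw [convDeriv_phi, mul_zero])

theorem lapXY_invSqProfile_phi (hp : phi α₁ α₂ C₁ p ≠ 0) :
    lapXY (fun q => a * (phi α₁ α₂ C₁ q ^ 2)⁻¹ + b * phi α₁ α₂ C₁ q + c) p
      = 6 * a * (α₁ ^ 2 + α₂ ^ 2) * (phi α₁ α₂ C₁ p ^ 4)⁻¹ :=
  (lapXY_comp (contDiff_phi α₁ α₂ C₁)
    ((eventually_ne_nhds hp).mono fun _ hs => hasDerivAt_invSqProfile a b c hs)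
    (hasDerivAt_invCubeProfile a b hp)).trans
    (by rw [pdX_phi_sq_add_pdY_phi_sq, lapXY_phi]; ring)

end Profile

/-- Exact solution (3-56) of system (2-23): on `Ω = {φ ≠ 0}` the functions
`u = 6d₂(α₁²+α₂²)φ⁻²`, `v = 6d₁(α₁²+α₂²)φ⁻²`,
`w = ((α₁²+α₂²)/d₃)(−6d₁d₂φ⁻² + C₃(φ−C₁) + C₄)` solve system (2-23). -/
theorem exact_solution_3_56
    (d₁ d₂ d₃ α₁ α₂ C₁ C₃ C₄ : ℝ) (hd₃ : d₃ ≠ 0) :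
    Solves223 d₁ d₂ d₃
      (fun p => 6 * d₂ * (α₁ ^ 2 + α₂ ^ 2) * ((phi α₁ α₂ C₁ p) ^ 2)⁻¹)
      (fun p => 6 * d₁ * (α₁ ^ 2 + α₂ ^ 2) * ((phi α₁ α₂ C₁ p) ^ 2)⁻¹)
      (fun p => ((α₁ ^ 2 + α₂ ^ 2) / d₃) *
        (-(6 * d₁ * d₂) * ((phi α₁ α₂ C₁ p) ^ 2)⁻¹ + C₃ * (phi α₁ α₂ C₁ p - C₁) + C₄))
      {p : ℝ × ℝ × ℝ | phi α₁ α₂ C₁ p ≠ 0} := by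
  have hu : (fun p => 6 * d₂ * (α₁ ^ 2 + α₂ ^ 2) * ((phi α₁ α₂ C₁ p) ^ 2)⁻¹)
      = fun p => 6 * d₂ * (α₁ ^ 2 + α₂ ^ 2) * (phi α₁ α₂ C₁ p ^ 2)⁻¹ + 0 * phi α₁ α₂ C₁ p + 0 := by
    funext p; ring
  have hv : (fun p => 6 * d₁ * (α₁ ^ 2 + α₂ ^ 2) * ((phi α₁ α₂ C₁ p) ^ 2)⁻¹)
      = fun p => 6 * d₁ * (α₁ ^ 2 + α₂ ^ 2) * (phi α₁ α₂ C₁ p ^ 2)⁻¹ + 0 * phi α₁ α₂ C₁ p + 0 := by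
    funext p; ring
  have hw : (fun p => ((α₁ ^ 2 + α₂ ^ 2) / d₃) *
        (-(6 * d₁ * d₂) * ((phi α₁ α₂ C₁ p) ^ 2)⁻¹ + C₃ * (phi α₁ α₂ C₁ p - C₁) + C₄))
      = fun p => -(6 * d₁ * d₂) * (α₁ ^ 2 + α₂ ^ 2) / d₃ * (phi α₁ α₂ C₁ p ^ 2)⁻¹
          + (α₁ ^ 2 + α₂ ^ 2) * C₃ / d₃ * phi α₁ α₂ C₁ p
          + (α₁ ^ 2 + α₂ ^ 2) * (C₄ - C₃ * C₁) / d₃ := by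
    funext p; ring
  refine solves223_iff.mpr fun p (hp : phi α₁ α₂ C₁ p ≠ 0) => ?_
  simp only [hu, hv, hw, convDeriv_invSqProfile_phi _ _ _ hp, lapXY_invSqProfile_phi _ _ _ hp]
  refine ⟨?_, ?_, ?_⟩ <;> field_simp <;> ring
end
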